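/- arXiv:2407.04259 — 3 statements merged into one kernel-verified Lean document; each statement's English description precedes it below -/
import Mathlib

section
/- For every initial state x ∈ 𝒳 one has max_{a ∈ A} Q*(x,a) = 𝒯V(x) = V(x); i.e., the robust value function satisfies the dynamic programming (Bellman) equation and is attained as the maximum over actions of the robust optimal Q-function. -/
/-!
Robust Markov decision problem with a finite ambiguity set.

States `X` and actions `A` are finite nonempty sets.  For each state-action
pair the ambiguity set consists of `N` probability measures
`P x a k : PMF X`, `k : Fin N`.  A policy is a sequence of maps
`a : ℕ → X → A`.  The admissible transition-kernel sequences for a policy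
are those `K : ℕ → X → PMF X` with `K t x ∈ 𝒫(x, a t x)` for all `t, x`;
these parameterize the admissible path measures `δ_x ⊗ K 0 ⊗ K 1 ⊗ ⋯`.
Since the time-`t` reward only depends on `(X_t, X_{t+1})`, the expected
discounted reward of such a path measure equals
`∑' t, α ^ t * E_{μ_t}[ E_{K t y}[ r y (a t y) ⋅ ] ]`, where `μ_t` denotes
the time-`t` marginal; this is how `policyValue` is defined below.
-/

open scoped BigOperators

/-- Expectation of `f` under a probability measure `p` on the finite set `X`. -/
noncomputable def pexp {X : Type} [Fintype X] (p : PMF X) (f : X → ℝ) : ℝ :=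
  ∑ x, (p x).toReal * f x

/-- Time-`t` marginal of the path measure `δ_{x0} ⊗ K 0 ⊗ K 1 ⊗ ⋯`. -/
noncomputable def margin {X : Type} (K : ℕ → X → PMF X) (x0 : X) : ℕ → PMF X
  | 0 => PMF.pure x0
  | t + 1 => (margin K x0 t).bind (K t)

/-- Expected discounted cumulative reward
`E_ℙ[ ∑_{t=0}^∞ α^t r(X_t, a_t(X_t), X_{t+1}) ]` under the path measure
`ℙ = δ_{x0} ⊗ K 0 ⊗ K 1 ⊗ ⋯` determined by the kernel sequence `K`. -/
noncomputable def policyValue {X A : Type} [Fintype X] (r : X → A → X → ℝ) (α : ℝ)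
    (a : ℕ → X → A) (K : ℕ → X → PMF X) (x0 : X) : ℝ :=
  ∑' t : ℕ, α ^ t *
    pexp (margin K x0 t) (fun y => pexp (K t y) (fun y' => r y (a t y) y'))

/-- The robust value function
`V(x) = sup_{𝐚 ∈ 𝒜} inf_{ℙ ∈ 𝔓_{x,𝐚}} E_ℙ[∑ α^t r]`. -/
noncomputable def Vrob {X A : Type} [Fintype X] (r : X → A → X → ℝ) (α : ℝ) (N : ℕ)
    (P : X → A → Fin N → PMF X) (x : X) : ℝ :=
  ⨆ a : ℕ → X → A,
    ⨅ K : {K : ℕ → X → PMF X //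
        ∀ (t : ℕ) (x' : X), ∃ k : Fin N, K t x' = P x' (a t x') k},
      policyValue r α a K.1 x

/-- The robust optimal `Q`-value function
`Q*(x,b) = min_{ℙ ∈ 𝒫(x,b)} E_ℙ[ r(x,b,X₁) + α V(X₁) ]`. -/
noncomputable def Qstar {X A : Type} [Fintype X] (r : X → A → X → ℝ) (α : ℝ) (N : ℕ)
    (P : X → A → Fin N → PMF X) (x : X) (b : A) : ℝ :=
  ⨅ k : Fin N, pexp (P x b k) (fun x' => r x b x' + α * Vrob r α N P x')

/-- The one-step (robust Bellman) operator applied to the value function: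
`𝒯V(x) = max_{b ∈ A} min_{ℙ ∈ 𝒫(x,b)} E_ℙ[ r(x,b,X₁) + α V(X₁) ]`. -/
noncomputable def Tcal {X A : Type} [Fintype X] (r : X → A → X → ℝ) (α : ℝ) (N : ℕ)
    (P : X → A → Fin N → PMF X) (x : X) : ℝ :=
  ⨆ b : A, ⨅ k : Fin N, pexp (P x b k) (fun x' => r x b x' + α * Vrob r α N P x')

section aux
variable {X : Type} [Fintype X]

lemma sum_pmf_toReal (p : PMF X) : ∑ x, (p x).toReal = 1 := by
  have h := p.tsum_coe
  rw [tsum_fintype] at h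
  rw [← ENNReal.toReal_sum (fun a _ => p.apply_ne_top a), h, ENNReal.toReal_one]

lemma pexp_pure (x0 : X) (f : X → ℝ) : pexp (PMF.pure x0) f = f x0 := by
  classical
  simp only [pexp, PMF.pure_apply, apply_ite ENNReal.toReal, ite_mul, ENNReal.toReal_one,
    ENNReal.toReal_zero, one_mul, zero_mul]
  rw [Finset.sum_ite_eq' Finset.univ x0 f]
  simp

lemma pexp_add (p : PMF X) (f g : X → ℝ) :
    pexp p (fun y => f y + g y) = pexp p f + pexp p g := by
  simp [pexp, mul_add, Finset.sum_add_distrib]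

lemma pexp_sub (p : PMF X) (f g : X → ℝ) :
    pexp p (fun y => f y - g y) = pexp p f - pexp p g := by
  simp [pexp, mul_sub, Finset.sum_sub_distrib]

lemma pexp_const_mul (p : PMF X) (c : ℝ) (f : X → ℝ) :
    pexp p (fun y => c * f y) = c * pexp p f := by
  simp [pexp, Finset.mul_sum, mul_left_comm]

lemma pexp_mono (p : PMF X) {f g : X → ℝ} (h : ∀ y, f y ≤ g y) : pexp p f ≤ pexp p g :=
  Finset.sum_le_sum fun y _ => mul_le_mul_of_nonneg_left (h y) ENNReal.toReal_nonneg

lemma pexp_abs_le (p : PMF X) {f : X → ℝ} {C : ℝ} (h : ∀ y, |f y| ≤ C) : |pexp p f| ≤ C := by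
  calc |pexp p f| ≤ ∑ y, |(p y).toReal * f y| := Finset.abs_sum_le_sum_abs _ _
    _ ≤ ∑ y, (p y).toReal * C := by
        refine Finset.sum_le_sum fun y _ => ?_
        rw [abs_mul, abs_of_nonneg ENNReal.toReal_nonneg]
        exact mul_le_mul_of_nonneg_left (h y) ENNReal.toReal_nonneg
    _ = C := by rw [← Finset.sum_mul, sum_pmf_toReal, one_mul]

lemma pexp_bind (p : PMF X) (q : X → PMF X) (f : X → ℝ) :
    pexp (p.bind q) f = pexp p (fun y => pexp (q y) f) := by
  unfold pexp
  have h : ∀ x, ((p.bind q) x).toReal = ∑ y, (p y).toReal * (q y x).toReal := by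
    intro x
    rw [PMF.bind_apply, tsum_fintype,
      ENNReal.toReal_sum (fun y _ => ENNReal.mul_ne_top (p.apply_ne_top y) (PMF.apply_ne_top _ x))]
    simp [ENNReal.toReal_mul]
  simp_rw [h, Finset.sum_mul]
  rw [Finset.sum_comm]
  simp_rw [Finset.mul_sum, mul_assoc]

lemma ciSup_sub_le {ι : Type*} [Fintype ι] [Nonempty ι] {F G : ι → ℝ} {c : ℝ}
    (h : ∀ i, F i ≤ G i + c) : (⨆ i, F i) ≤ (⨆ i, G i) + c := by
  refine ciSup_le fun i => (h i).trans ?_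
  gcongr
  exact le_ciSup (Finite.bddAbove_range G) i

lemma ciInf_sub_le {ι : Type*} [Fintype ι] [Nonempty ι] {F G : ι → ℝ} {c : ℝ}
    (h : ∀ i, F i ≤ G i + c) : (⨅ i, F i) ≤ (⨅ i, G i) + c := by
  have h2 : (⨅ i, F i) - c ≤ ⨅ i, G i :=
    le_ciInf fun i => by
      have h3 := ciInf_le (Finite.bddBelow_range F) i
      linarith [h i]
  linarith

lemma abs_ciSup_sub_le {ι : Type*} [Fintype ι] [Nonempty ι] {F G : ι → ℝ} {c : ℝ}
    (h : ∀ i, |F i - G i| ≤ c) : |(⨆ i, F i) - ⨆ i, G i| ≤ c := by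
  rw [abs_sub_le_iff]
  constructor
  · have := ciSup_sub_le (F := F) (G := G) (c := c) fun i => by
      have := (abs_sub_le_iff.mp (h i)).1; linarith
    linarith
  · have := ciSup_sub_le (F := G) (G := F) (c := c) fun i => by
      have := (abs_sub_le_iff.mp (h i)).2; linarith
    linarith

lemma abs_ciInf_sub_le {ι : Type*} [Fintype ι] [Nonempty ι] {F G : ι → ℝ} {c : ℝ}
    (h : ∀ i, |F i - G i| ≤ c) : |(⨅ i, F i) - ⨅ i, G i| ≤ c := by
  rw [abs_sub_le_iff]
  constructor
  · have := ciInf_sub_le (F := F) (G := G) (c := c) fun i => by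
      have := (abs_sub_le_iff.mp (h i)).1; linarith
    linarith
  · have := ciInf_sub_le (F := G) (G := F) (c := c) fun i => by
      have := (abs_sub_le_iff.mp (h i)).2; linarith
    linarith

end aux

section mainlem
variable {X A : Type} [Fintype X] [Fintype A]
variable (r : X → A → X → ℝ) (α : ℝ)

lemma step_partial_le (hα0 : 0 ≤ α) (V : X → ℝ) (a : ℕ → X → A) (K : ℕ → X → PMF X)
    (h : ∀ t x', pexp (K t x') (fun y => r x' (a t x') y + α * V y) ≤ V x') (x0 : X) (n : ℕ) :
    (∑ t ∈ Finset.range n, α ^ t *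
        pexp (margin K x0 t) (fun y => pexp (K t y) (fun y' => r y (a t y) y')))
      + α ^ n * pexp (margin K x0 n) V ≤ V x0 := by
  induction n with
  | zero => simp [margin, pexp_pure]
  | succ n ih =>
    rw [Finset.sum_range_succ]
    have hb : pexp (margin K x0 (n+1)) V = pexp (margin K x0 n) (fun y => pexp (K n y) V) := by
      show pexp ((margin K x0 n).bind (K n)) V = _
      exact pexp_bind _ _ _
    have hmain : pexp (margin K x0 n) (fun y => pexp (K n y) (fun y' => r y (a n y) y'))
        + α * pexp (margin K x0 n) (fun y => pexp (K n y) V)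
        ≤ pexp (margin K x0 n) V := by
      rw [← pexp_const_mul, ← pexp_add]
      refine pexp_mono _ fun y => ?_
      calc pexp (K n y) (fun y' => r y (a n y) y') + α * pexp (K n y) V
          = pexp (K n y) (fun y' => r y (a n y) y' + α * V y') := by
            rw [pexp_add, pexp_const_mul]
        _ ≤ V y := h n y
    have hp : (0:ℝ) ≤ α ^ n := pow_nonneg hα0 n
    have key : α ^ n * pexp (margin K x0 n) (fun y => pexp (K n y) (fun y' => r y (a n y) y'))
        + α ^ (n+1) * pexp (margin K x0 (n+1)) V ≤ α ^ n * pexp (margin K x0 n) V := by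
      rw [hb, pow_succ]
      calc α ^ n * pexp (margin K x0 n) (fun y => pexp (K n y) (fun y' => r y (a n y) y'))
          + α ^ n * α * pexp (margin K x0 n) (fun y => pexp (K n y) V)
          = α ^ n * (pexp (margin K x0 n) (fun y => pexp (K n y) (fun y' => r y (a n y) y'))
            + α * pexp (margin K x0 n) (fun y => pexp (K n y) V)) := by ring
        _ ≤ α ^ n * pexp (margin K x0 n) V := mul_le_mul_of_nonneg_left hmain hp
    linarith

lemma step_partial_ge (hα0 : 0 ≤ α) (V : X → ℝ) (a : ℕ → X → A) (K : ℕ → X → PMF X)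
    (h : ∀ t x', V x' ≤ pexp (K t x') (fun y => r x' (a t x') y + α * V y)) (x0 : X) (n : ℕ) :
    V x0 ≤ (∑ t ∈ Finset.range n, α ^ t *
        pexp (margin K x0 t) (fun y => pexp (K t y) (fun y' => r y (a t y) y')))
      + α ^ n * pexp (margin K x0 n) V := by
  induction n with
  | zero => simp [margin, pexp_pure]
  | succ n ih =>
    rw [Finset.sum_range_succ]
    have hb : pexp (margin K x0 (n+1)) V = pexp (margin K x0 n) (fun y => pexp (K n y) V) := by
      show pexp ((margin K x0 n).bind (K n)) V = _
      exact pexp_bind _ _ _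
    have hmain : pexp (margin K x0 n) V
        ≤ pexp (margin K x0 n) (fun y => pexp (K n y) (fun y' => r y (a n y) y'))
          + α * pexp (margin K x0 n) (fun y => pexp (K n y) V) := by
      rw [← pexp_const_mul, ← pexp_add]
      refine pexp_mono _ fun y => ?_
      calc V y ≤ pexp (K n y) (fun y' => r y (a n y) y' + α * V y') := h n y
        _ = pexp (K n y) (fun y' => r y (a n y) y') + α * pexp (K n y) V := by
            rw [pexp_add, pexp_const_mul]
    have hp : (0:ℝ) ≤ α ^ n := pow_nonneg hα0 n
    have key : α ^ n * pexp (margin K x0 n) V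
        ≤ α ^ n * pexp (margin K x0 n) (fun y => pexp (K n y) (fun y' => r y (a n y) y'))
          + α ^ (n+1) * pexp (margin K x0 (n+1)) V := by
      rw [hb, pow_succ]
      calc α ^ n * pexp (margin K x0 n) V
          ≤ α ^ n * (pexp (margin K x0 n) (fun y => pexp (K n y) (fun y' => r y (a n y) y'))
            + α * pexp (margin K x0 n) (fun y => pexp (K n y) V)) :=
            mul_le_mul_of_nonneg_left hmain hp
        _ = α ^ n * pexp (margin K x0 n) (fun y => pexp (K n y) (fun y' => r y (a n y) y'))
            + α ^ n * α * pexp (margin K x0 n) (fun y => pexp (K n y) V) := by ring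
    linarith

lemma pv_norm_bound {M : ℝ} (hM : ∀ x b y, |r x b y| ≤ M) (hα0 : 0 < α)
    (a : ℕ → X → A) (K : ℕ → X → PMF X) (x0 : X) (t : ℕ) :
    ‖α ^ t * pexp (margin K x0 t) (fun y => pexp (K t y) (fun y' => r y (a t y) y'))‖
      ≤ M * α ^ t := by
  rw [Real.norm_eq_abs, abs_mul, abs_pow, abs_of_pos hα0]
  have h1 : |pexp (margin K x0 t) (fun y => pexp (K t y) (fun y' => r y (a t y) y'))| ≤ M :=
    pexp_abs_le _ fun y => pexp_abs_le _ fun y' => hM _ _ _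
  calc α ^ t * |pexp (margin K x0 t) (fun y => pexp (K t y) (fun y' => r y (a t y) y'))|
      ≤ α ^ t * M := mul_le_mul_of_nonneg_left h1 (pow_nonneg hα0.le t)
    _ = M * α ^ t := mul_comm _ _

lemma pv_summable {M : ℝ} (hM : ∀ x b y, |r x b y| ≤ M) (hα0 : 0 < α) (hα1 : α < 1)
    (a : ℕ → X → A) (K : ℕ → X → PMF X) (x0 : X) :
    Summable (fun t => α ^ t *
      pexp (margin K x0 t) (fun y => pexp (K t y) (fun y' => r y (a t y) y'))) :=
  Summable.of_norm_bounded ((summable_geometric_of_lt_one hα0.le hα1).mul_left M)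
    (pv_norm_bound r α hM hα0 a K x0)

lemma abs_policyValue_le {M : ℝ} (hM : ∀ x b y, |r x b y| ≤ M) (hα0 : 0 < α) (hα1 : α < 1)
    (a : ℕ → X → A) (K : ℕ → X → PMF X) (x0 : X) :
    |policyValue r α a K x0| ≤ ∑' t : ℕ, M * α ^ t := by
  rw [policyValue, ← Real.norm_eq_abs]
  refine (norm_tsum_le_tsum_norm ((pv_summable r α hM hα0 hα1 a K x0).norm)).trans ?_
  exact Summable.tsum_le_tsum (pv_norm_bound r α hM hα0 a K x0)
    ((pv_summable r α hM hα0 hα1 a K x0).norm)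
    ((summable_geometric_of_lt_one hα0.le hα1).mul_left M)

open Filter in
lemma policyValue_le_of_step (hα0 : 0 < α) (hα1 : α < 1)
    {M : ℝ} (hM : ∀ x b y, |r x b y| ≤ M)
    (V : X → ℝ) {C : ℝ} (hC : ∀ y, |V y| ≤ C)
    (a : ℕ → X → A) (K : ℕ → X → PMF X)
    (h : ∀ t x', pexp (K t x') (fun y => r x' (a t x') y + α * V y) ≤ V x') (x0 : X) :
    policyValue r α a K x0 ≤ V x0 := by
  have hps : Tendsto (fun n => ∑ t ∈ Finset.range n, α ^ t *
      pexp (margin K x0 t) (fun y => pexp (K t y) (fun y' => r y (a t y) y'))) atTop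
      (nhds (policyValue r α a K x0)) :=
    (pv_summable r α hM hα0 hα1 a K x0).hasSum.tendsto_sum_nat
  have hub : ∀ n, (∑ t ∈ Finset.range n, α ^ t *
      pexp (margin K x0 t) (fun y => pexp (K t y) (fun y' => r y (a t y) y')))
      ≤ V x0 + C * α ^ n := by
    intro n
    have h1 := step_partial_le r α hα0.le V a K h x0 n
    have h2 := pexp_abs_le (margin K x0 n) hC
    have hp : (0:ℝ) ≤ α ^ n := pow_nonneg hα0.le n
    have h3 := (abs_le.mp h2).1
    nlinarith
  have hrhs : Tendsto (fun n : ℕ => V x0 + C * α ^ n) atTop (nhds (V x0)) := by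
    have h4 := (tendsto_pow_atTop_nhds_zero_of_lt_one hα0.le hα1).const_mul C
    have := tendsto_const_nhds (α := ℕ) (f := atTop) (x := V x0) |>.add h4
    simpa using this
  exact le_of_tendsto_of_tendsto' hps hrhs hub

open Filter in
lemma policyValue_ge_of_step (hα0 : 0 < α) (hα1 : α < 1)
    {M : ℝ} (hM : ∀ x b y, |r x b y| ≤ M)
    (V : X → ℝ) {C : ℝ} (hC : ∀ y, |V y| ≤ C)
    (a : ℕ → X → A) (K : ℕ → X → PMF X)
    (h : ∀ t x', V x' ≤ pexp (K t x') (fun y => r x' (a t x') y + α * V y)) (x0 : X) :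
    V x0 ≤ policyValue r α a K x0 := by
  have hps : Tendsto (fun n => ∑ t ∈ Finset.range n, α ^ t *
      pexp (margin K x0 t) (fun y => pexp (K t y) (fun y' => r y (a t y) y'))) atTop
      (nhds (policyValue r α a K x0)) :=
    (pv_summable r α hM hα0 hα1 a K x0).hasSum.tendsto_sum_nat
  have hub : ∀ n, V x0 - C * α ^ n ≤ (∑ t ∈ Finset.range n, α ^ t *
      pexp (margin K x0 t) (fun y => pexp (K t y) (fun y' => r y (a t y) y'))) := by
    intro n
    have h1 := step_partial_ge r α hα0.le V a K h x0 n
    have h2 := pexp_abs_le (margin K x0 n) hC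
    have hp : (0:ℝ) ≤ α ^ n := pow_nonneg hα0.le n
    have h3 := (abs_le.mp h2).2
    nlinarith
  have hrhs : Tendsto (fun n : ℕ => V x0 - C * α ^ n) atTop (nhds (V x0)) := by
    have h4 := (tendsto_pow_atTop_nhds_zero_of_lt_one hα0.le hα1).const_mul C
    have := tendsto_const_nhds (α := ℕ) (f := atTop) (x := V x0) |>.sub h4
    simpa using this
  exact le_of_tendsto_of_tendsto' hrhs hps hub

end mainlem

/-- **Dynamic programming principle.**  If `0 < α < 1`, then for every state `x`,
`max_{b ∈ A} Q*(x,b) = 𝒯V(x) = V(x)`. -/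
theorem robust_bellman_equation {X A : Type} [Fintype X] [Nonempty X]
    [Fintype A] [Nonempty A]
    (r : X → A → X → ℝ) (α : ℝ) (hα0 : 0 < α) (hα1 : α < 1)
    (N : ℕ) (hN : 0 < N) (P : X → A → Fin N → PMF X) :
    ∀ x : X,
      (⨆ b : A, Qstar r α N P x b) = Tcal r α N P x ∧
        Tcal r α N P x = Vrob r α N P x := by
  haveI : Nonempty (Fin N) := ⟨⟨0, hN⟩⟩
  obtain ⟨M, hM⟩ : ∃ M, ∀ x b y, |r x b y| ≤ M := by
    obtain ⟨p, hp⟩ := Finite.exists_max fun p : X × A × X => |r p.1 p.2.1 p.2.2|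
    exact ⟨_, fun x b y => hp (x, b, y)⟩
  -- the Bellman operator
  set T : (X → ℝ) → (X → ℝ) :=
    fun f x => ⨆ b : A, ⨅ k : Fin N, pexp (P x b k) (fun y => r x b y + α * f y) with hTdef
  have hlip : LipschitzWith ⟨α, hα0.le⟩ T := by
    refine LipschitzWith.of_dist_le_mul fun f g => ?_
    suffices h : dist (T f) (T g) ≤ α * dist f g by exact h
    rw [dist_pi_le_iff (mul_nonneg hα0.le dist_nonneg)]
    intro x
    rw [Real.dist_eq]
    refine abs_ciSup_sub_le fun b => abs_ciInf_sub_le fun k => ?_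
    have heq : pexp (P x b k) (fun y => r x b y + α * f y)
        - pexp (P x b k) (fun y => r x b y + α * g y)
        = α * pexp (P x b k) (fun y => f y - g y) := by
      rw [pexp_add, pexp_add, pexp_const_mul, pexp_const_mul, pexp_sub]
      ring
    rw [heq, abs_mul, abs_of_pos hα0]
    refine mul_le_mul_of_nonneg_left ?_ hα0.le
    refine pexp_abs_le _ fun y => ?_
    rw [← Real.dist_eq]
    exact dist_le_pi_dist f g y
  have hcontr : ContractingWith ⟨α, hα0.le⟩ T :=
    ⟨NNReal.coe_lt_coe.mp hα1, hlip⟩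
  set Vs : X → ℝ := ContractingWith.fixedPoint T hcontr with hVsdef
  have hfix : T Vs = Vs := hcontr.fixedPoint_isFixedPt
  obtain ⟨C, hC⟩ : ∃ C, ∀ y, |Vs y| ≤ C := by
    obtain ⟨y0, hy0⟩ := Finite.exists_max fun y => |Vs y|
    exact ⟨_, hy0⟩
  set B : ℝ := ∑' t : ℕ, M * α ^ t with hBdef
  have hPVabs : ∀ (a : ℕ → X → A) (K : ℕ → X → PMF X) (x : X),
      |policyValue r α a K x| ≤ B := fun a K x => abs_policyValue_le r α hM hα0 hα1 a K x
  -- upper bound : Vrob ≤ Vs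
  have hle : ∀ x, Vrob r α N P x ≤ Vs x := by
    intro x
    refine ciSup_le fun a => ?_
    have hmin : ∀ (x' : X) (b : A), ∃ k : Fin N, ∀ k',
        pexp (P x' b k) (fun y => r x' b y + α * Vs y)
          ≤ pexp (P x' b k') (fun y => r x' b y + α * Vs y) := fun x' b =>
      Finite.exists_min fun k => pexp (P x' b k) (fun y => r x' b y + α * Vs y)
    choose km hkm using hmin
    set K : ℕ → X → PMF X := fun t x' => P x' (a t x') (km x' (a t x')) with hKdef
    have hadm : ∀ (t : ℕ) (x' : X), ∃ k : Fin N, K t x' = P x' (a t x') k :=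
      fun t x' => ⟨_, rfl⟩
    have hstep : ∀ t x', pexp (K t x') (fun y => r x' (a t x') y + α * Vs y) ≤ Vs x' := by
      intro t x'
      have h1 : pexp (K t x') (fun y => r x' (a t x') y + α * Vs y)
          ≤ ⨅ k : Fin N, pexp (P x' (a t x') k) (fun y => r x' (a t x') y + α * Vs y) :=
        le_ciInf fun k => hkm x' (a t x') k
      have h2 : (⨅ k : Fin N, pexp (P x' (a t x') k) (fun y => r x' (a t x') y + α * Vs y))
          ≤ T Vs x' :=
        le_ciSup (Finite.bddAbove_range fun b =>
          ⨅ k : Fin N, pexp (P x' b k) (fun y => r x' b y + α * Vs y)) (a t x')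
      calc pexp (K t x') (fun y => r x' (a t x') y + α * Vs y) ≤ T Vs x' := h1.trans h2
        _ = Vs x' := congrFun hfix x'
    have hbdd : BddBelow (Set.range fun K : {K : ℕ → X → PMF X //
        ∀ (t : ℕ) (x' : X), ∃ k : Fin N, K t x' = P x' (a t x') k} =>
        policyValue r α a K.1 x) := by
      refine ⟨-B, ?_⟩
      rintro v ⟨K', rfl⟩
      linarith [(abs_le.mp (hPVabs a K'.1 x)).1]
    exact (ciInf_le hbdd ⟨K, hadm⟩).trans
      (policyValue_le_of_step r α hα0 hα1 hM Vs hC a K hstep x)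
  -- lower bound : Vs ≤ Vrob
  have hge : ∀ x, Vs x ≤ Vrob r α N P x := by
    intro x
    have hmax : ∀ x' : X, ∃ b : A, ∀ b',
        (⨅ k : Fin N, pexp (P x' b' k) (fun y => r x' b' y + α * Vs y))
          ≤ ⨅ k : Fin N, pexp (P x' b k) (fun y => r x' b y + α * Vs y) := fun x' =>
      Finite.exists_max fun b => ⨅ k : Fin N, pexp (P x' b k) (fun y => r x' b y + α * Vs y)
    choose bs hbs using hmax
    set a : ℕ → X → A := fun _ x' => bs x' with hadef
    have key : ∀ x', Vs x'
        = ⨅ k : Fin N, pexp (P x' (bs x') k) (fun y => r x' (bs x') y + α * Vs y) := by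
      intro x'
      rw [← congrFun hfix x']
      refine le_antisymm (ciSup_le (hbs x')) ?_
      exact le_ciSup (Finite.bddAbove_range fun b =>
        ⨅ k : Fin N, pexp (P x' b k) (fun y => r x' b y + α * Vs y)) (bs x')
    haveI hK0 : Nonempty {K : ℕ → X → PMF X //
        ∀ (t : ℕ) (x' : X), ∃ k : Fin N, K t x' = P x' (a t x') k} :=
      ⟨⟨fun t x' => P x' (a t x') ⟨0, hN⟩, fun t x' => ⟨_, rfl⟩⟩⟩
    have hVsx : Vs x ≤ ⨅ K : {K : ℕ → X → PMF X //
        ∀ (t : ℕ) (x' : X), ∃ k : Fin N, K t x' = P x' (a t x') k},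
        policyValue r α a K.1 x := by
      refine le_ciInf fun K => ?_
      refine policyValue_ge_of_step r α hα0 hα1 hM Vs hC a K.1 ?_ x
      intro t x'
      obtain ⟨k, hk⟩ := K.2 t x'
      rw [key x', hk]
      exact ciInf_le (Finite.bddBelow_range fun k =>
        pexp (P x' (a t x') k) (fun y => r x' (a t x') y + α * Vs y)) k
    have hbddA : BddAbove (Set.range fun a : ℕ → X → A =>
        ⨅ K : {K : ℕ → X → PMF X //
          ∀ (t : ℕ) (x' : X), ∃ k : Fin N, K t x' = P x' (a t x') k},
        policyValue r α a K.1 x) := by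
      refine ⟨B, ?_⟩
      rintro v ⟨a', rfl⟩
      haveI : Nonempty {K : ℕ → X → PMF X //
          ∀ (t : ℕ) (x' : X), ∃ k : Fin N, K t x' = P x' (a' t x') k} :=
        ⟨⟨fun t x' => P x' (a' t x') ⟨0, hN⟩, fun t x' => ⟨_, rfl⟩⟩⟩
      refine ciInf_le_of_le ?_ (Classical.arbitrary _) ?_
      · refine ⟨-B, ?_⟩
        rintro v ⟨K', rfl⟩
        linarith [(abs_le.mp (hPVabs a' K'.1 x)).1]
      · exact (abs_le.mp (hPVabs a' _ x)).2
    refine hVsx.trans ?_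
    unfold Vrob
    exact le_ciSup hbddA a
  have hV : Vrob r α N P = Vs := funext fun x => le_antisymm (hle x) (hge x)
  intro x
  constructor
  · rfl
  · have h1 : Tcal r α N P x = T (Vrob r α N P) x := rfl
    rw [h1, hV]
    exact congrFun hfix x
end

section
/- If 0 < α < 1, then the robust optimal Q-function is a fixed point of the robust Bellman operator: 𝓗Q*(x,a) = Q*(x,a) for all (x,a) ∈ 𝒳 × A. -/
/-!
Robust Markov decision problem with a finite ambiguity set.

States `X` and actions `A` are finite nonempty sets.  For each state-action
pair the ambiguity set consists of `N` probability measures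
`P x a k : PMF X`, `k : Fin N`.  A policy is a sequence of maps
`a : ℕ → X → A`.  The admissible transition-kernel sequences for a policy
are those `K : ℕ → X → PMF X` with `K t x ∈ 𝒫(x, a t x)` for all `t, x`;
these parameterize the admissible path measures `δ_x ⊗ K 0 ⊗ K 1 ⊗ ⋯`.
Since the time-`t` reward only depends on `(X_t, X_{t+1})`, the expected
discounted reward of such a path measure equals
`∑' t, α ^ t * E_{μ_t}[ E_{K t y}[ r y (a t y) ⋅ ] ]`, where `μ_t` denotes
the time-`t` marginal; this is how `policyValue` is defined below.
-/

open scoped BigOperators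

/-- The robust Bellman operator `𝓗` acting on functions `v : X × A → ℝ`:
`𝓗v(x,b) = min_{ℙ ∈ 𝒫(x,b)} E_ℙ[ r(x,b,X₁) + α max_{c ∈ A} v(X₁,c) ]`. -/
noncomputable def Hop {X A : Type} [Fintype X] [Fintype A] (r : X → A → X → ℝ) (α : ℝ)
    (N : ℕ) (P : X → A → Fin N → PMF X) (v : X → A → ℝ) (x : X) (b : A) : ℝ :=
  ⨅ k : Fin N, pexp (P x b k) (fun x' => r x b x' + α * ⨆ c : A, v x' c)


/-! ### Auxiliary machinery -/

namespace RobustAux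

section fin

lemma exists_eq_ciSup {ι : Type*} [Finite ι] [Nonempty ι] (f : ι → ℝ) :
    ∃ i, (⨆ j, f j) = f i := by
  obtain ⟨i, hi⟩ := Finite.exists_max f
  exact ⟨i, le_antisymm (ciSup_le hi) (le_ciSup (Set.finite_range f).bddAbove i)⟩

lemma exists_eq_ciInf {ι : Type*} [Finite ι] [Nonempty ι] (f : ι → ℝ) :
    ∃ i, (⨅ j, f j) = f i := by
  obtain ⟨i, hi⟩ := Finite.exists_min f
  exact ⟨i, le_antisymm (ciInf_le (Set.finite_range f).bddBelow i) (le_ciInf hi)⟩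

end fin

set_option linter.unusedSectionVars false

variable {X A : Type} [Fintype X]

lemma pexp_sum_one (p : PMF X) : ∑ x : X, (p x).toReal = 1 := by
  have h := p.tsum_coe
  rw [tsum_fintype] at h
  have : (∑ x : X, p x).toReal = 1 := by rw [h]; simp
  rwa [ENNReal.toReal_sum (fun x _ => p.apply_ne_top x)] at this

lemma pexp_const (p : PMF X) (c : ℝ) : pexp p (fun _ => c) = c := by
  unfold pexp
  rw [← Finset.sum_mul, pexp_sum_one, one_mul]

lemma pexp_mono (p : PMF X) {f g : X → ℝ} (h : ∀ x, f x ≤ g x) :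
    pexp p f ≤ pexp p g := by
  apply Finset.sum_le_sum
  intro x _
  exact mul_le_mul_of_nonneg_left (h x) ENNReal.toReal_nonneg

lemma pexp_le (p : PMF X) {f : X → ℝ} {M : ℝ} (h : ∀ x, f x ≤ M) : pexp p f ≤ M := by
  calc pexp p f ≤ pexp p (fun _ => M) := pexp_mono p h
    _ = M := pexp_const p M

lemma le_pexp (p : PMF X) {f : X → ℝ} {M : ℝ} (h : ∀ x, M ≤ f x) : M ≤ pexp p f := by
  calc M = pexp p (fun _ => M) := (pexp_const p M).symm
    _ ≤ pexp p f := pexp_mono p h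

lemma abs_pexp_le (p : PMF X) {f : X → ℝ} {M : ℝ} (h : ∀ x, |f x| ≤ M) :
    |pexp p f| ≤ M := by
  rw [abs_le]
  constructor
  · exact le_pexp p (fun x => (abs_le.mp (h x)).1)
  · exact pexp_le p (fun x => (abs_le.mp (h x)).2)

lemma pexp_add (p : PMF X) (f g : X → ℝ) :
    pexp p (fun x => f x + g x) = pexp p f + pexp p g := by
  unfold pexp
  rw [← Finset.sum_add_distrib]
  congr 1; funext x; ring

lemma pexp_mul_left (p : PMF X) (c : ℝ) (f : X → ℝ) :
    pexp p (fun x => c * f x) = c * pexp p f := by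
  unfold pexp
  rw [Finset.mul_sum]
  congr 1; funext x; ring

lemma pexp_bind (p : PMF X) (q : X → PMF X) (f : X → ℝ) :
    pexp (p.bind q) f = pexp p (fun x => pexp (q x) f) := by
  unfold pexp
  have hval : ∀ y, ((p.bind q) y).toReal = ∑ x : X, (p x).toReal * (q x y).toReal := by
    intro y
    rw [PMF.bind_apply, tsum_fintype, ENNReal.toReal_sum]
    · exact Finset.sum_congr rfl fun x _ => ENNReal.toReal_mul
    · exact fun x _ => ENNReal.mul_ne_top (p.apply_ne_top x) ((q x).apply_ne_top y)
  simp_rw [hval, Finset.sum_mul, Finset.mul_sum]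
  rw [Finset.sum_comm]
  congr 1; funext x; congr 1; funext y; ring

lemma pexp_pure (x0 : X) (f : X → ℝ) : pexp (PMF.pure x0) f = f x0 := by
  unfold pexp
  rw [Finset.sum_eq_single x0]
  · simp
  · intro y _ hy; simp [PMF.pure_apply, hy]
  · intro h; exact absurd (Finset.mem_univ x0) h

lemma margin_shift (K : ℕ → X → PMF X) (x0 : X) (t : ℕ) :
    margin K x0 (t + 1) = (K 0 x0).bind (fun x1 => margin (fun s => K (s + 1)) x1 t) := by
  induction t with
  | zero =>
    show (margin K x0 0).bind (K 0) = _
    simp [margin, PMF.pure_bind, PMF.bind_pure]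
  | succ t ih =>
    show (margin K x0 (t+1)).bind (K (t+1)) = _
    rw [ih, PMF.bind_bind]
    rfl

variable (r : X → A → X → ℝ) {α : ℝ}

/-- the summand of `policyValue` -/
noncomputable def pvterm (a : ℕ → X → A) (K : ℕ → X → PMF X) (x0 : X) (α : ℝ) (t : ℕ) : ℝ :=
  α ^ t * pexp (margin K x0 t) (fun y => pexp (K t y) (fun y' => r y (a t y) y'))

lemma pvterm_abs_le {R : ℝ} (hR : ∀ x b y, |r x b y| ≤ R) (hα0 : 0 < α)
    (a : ℕ → X → A) (K : ℕ → X → PMF X) (x0 : X) (t : ℕ) :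
    |pvterm r a K x0 α t| ≤ α ^ t * R := by
  rw [pvterm, abs_mul, abs_pow, abs_of_pos hα0]
  refine mul_le_mul_of_nonneg_left ?_ (by positivity)
  exact abs_pexp_le _ (fun y => abs_pexp_le _ (fun y' => hR y (a t y) y'))

lemma pvterm_summable {R : ℝ} (hR : ∀ x b y, |r x b y| ≤ R) (hα0 : 0 < α) (hα1 : α < 1)
    (a : ℕ → X → A) (K : ℕ → X → PMF X) (x0 : X) :
    Summable (pvterm r a K x0 α) := by
  apply Summable.of_norm_bounded (g := fun t => α ^ t * R)
  · exact (summable_geometric_of_lt_one hα0.le hα1).mul_right R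
  · intro t; exact pvterm_abs_le r hR hα0 a K x0 t

lemma policyValue_eq_tsum (a : ℕ → X → A) (K : ℕ → X → PMF X) (x0 : X) :
    policyValue r α a K x0 = ∑' t, pvterm r a K x0 α t := rfl

lemma abs_policyValue_le {R : ℝ} (hR : ∀ x b y, |r x b y| ≤ R) (hα0 : 0 < α) (hα1 : α < 1)
    (a : ℕ → X → A) (K : ℕ → X → PMF X) (x0 : X) :
    |policyValue r α a K x0| ≤ R / (1 - α) := by
  rw [policyValue_eq_tsum]
  have hgeo : HasSum (fun t : ℕ => α ^ t * R) ((1 - α)⁻¹ * R) :=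
    (hasSum_geometric_of_lt_one hα0.le hα1).mul_right R
  have := tsum_of_norm_bounded hgeo (fun t => by
    rw [Real.norm_eq_abs]; exact pvterm_abs_le r hR hα0 a K x0 t)
  rw [Real.norm_eq_abs] at this
  calc |∑' t, pvterm r a K x0 α t| ≤ (1 - α)⁻¹ * R := this
    _ = R / (1 - α) := by ring

lemma policyValue_rec {R : ℝ} (hR : ∀ x b y, |r x b y| ≤ R) (hα0 : 0 < α) (hα1 : α < 1)
    (a : ℕ → X → A) (K : ℕ → X → PMF X) (x0 : X) :
    policyValue r α a K x0 =
      pexp (K 0 x0) (fun x1 => r x0 (a 0 x0) x1 +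
        α * policyValue r α (fun t => a (t + 1)) (fun t => K (t + 1)) x1) := by
  have hsum := pvterm_summable r hR hα0 hα1 a K x0
  rw [policyValue_eq_tsum, Summable.tsum_eq_zero_add hsum]
  have h0 : pvterm r a K x0 α 0 = pexp (K 0 x0) (fun y' => r x0 (a 0 x0) y') := by
    rw [pvterm]
    simp [margin, pexp_pure]
  let a' : ℕ → X → A := fun t => a (t + 1)
  let K' : ℕ → X → PMF X := fun t => K (t + 1)
  have hterm : ∀ t, pvterm r a K x0 α (t + 1) =
      α * pexp (K 0 x0) (fun x1 => pvterm r a' K' x1 α t) := by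
    intro t
    show _ = α * pexp (K 0 x0) (fun x1 => α ^ t * pexp (margin (fun s => K (s + 1)) x1 t)
      (fun y => pexp (K (t + 1) y) (fun y' => r y (a (t + 1) y) y')))
    rw [pvterm, margin_shift, pexp_bind, pexp_mul_left]
    ring
  calc pvterm r a K x0 α 0 + ∑' t, pvterm r a K x0 α (t + 1)
      = pexp (K 0 x0) (fun y' => r x0 (a 0 x0) y') +
        α * ∑' t, pexp (K 0 x0) (fun x1 => pvterm r a' K' x1 α t) := by
        rw [h0]
        congr 1
        rw [← tsum_mul_left]
        exact tsum_congr hterm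
    _ = pexp (K 0 x0) (fun x1 => r x0 (a 0 x0) x1 +
        α * policyValue r α a' K' x1) := by
        have hswap : ∑' t, pexp (K 0 x0) (fun x1 => pvterm r a' K' x1 α t)
            = pexp (K 0 x0) (fun x1 => ∑' t, pvterm r a' K' x1 α t) := by
          unfold pexp
          rw [Summable.tsum_finsetSum]
          · refine Finset.sum_congr rfl fun x1 _ => ?_
            exact tsum_mul_left
          · intro x1 _
            exact ((pvterm_summable r hR hα0 hα1 a' K' x1).mul_left _)
        rw [hswap, pexp_add, pexp_mul_left]
        rfl

end RobustAux

/-- The robust Bellman operator on value functions `v : X → ℝ`. -/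
noncomputable def Tbell {X A : Type} [Fintype X] [Fintype A] (r : X → A → X → ℝ) (α : ℝ)
    (N : ℕ) (P : X → A → Fin N → PMF X) (v : X → ℝ) : X → ℝ := fun x =>
  ⨆ b : A, ⨅ k : Fin N, pexp (P x b k) (fun x' => r x b x' + α * v x')

namespace RobustAux

variable {X A : Type} [Fintype X] [Nonempty X] [Fintype A] [Nonempty A]

/-- Existence of a fixed point of the robust Bellman operator, via the
Banach contraction principle. -/
theorem exists_Tbell_fixedPoint (r : X → A → X → ℝ) {α : ℝ} (hα0 : 0 < α) (hα1 : α < 1)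
    (N : ℕ) (hN : 0 < N) (P : X → A → Fin N → PMF X) :
    ∃ vstar : X → ℝ, Tbell r α N P vstar = vstar := by
  haveI : Nonempty (Fin N) := ⟨⟨0, hN⟩⟩
  have hkey : ∀ v w : X → ℝ, ∀ x, Tbell r α N P v x ≤ Tbell r α N P w x + α * dist v w := by
    intro v w x
    refine ciSup_le fun b => ?_
    have h1 : ∀ k : Fin N, pexp (P x b k) (fun x' => r x b x' + α * v x')
        ≤ pexp (P x b k) (fun x' => r x b x' + α * w x') + α * dist v w := by
      intro k
      have hmono := pexp_mono (P x b k) (f := fun x' => r x b x' + α * v x')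
        (g := fun x' => (r x b x' + α * w x') + α * dist v w) (fun x' => by
          show r x b x' + α * v x' ≤ (r x b x' + α * w x') + α * dist v w
          have h2 : dist (v x') (w x') ≤ dist v w := dist_le_pi_dist v w x'
          rw [Real.dist_eq] at h2
          have h3 := (abs_le.mp h2).2
          nlinarith [hα0.le])
      have heq : pexp (P x b k) (fun x' => (r x b x' + α * w x') + α * dist v w)
          = pexp (P x b k) (fun x' => r x b x' + α * w x') + α * dist v w := by
        rw [pexp_add (P x b k) (fun x' => r x b x' + α * w x') (fun _ => α * dist v w),
          pexp_const]
      rw [heq] at hmono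
      exact hmono
    have h2 : (⨅ k : Fin N, pexp (P x b k) (fun x' => r x b x' + α * v x'))
        ≤ (⨅ k : Fin N, pexp (P x b k) (fun x' => r x b x' + α * w x')) + α * dist v w := by
      rw [← sub_le_iff_le_add]
      refine le_ciInf fun k => ?_
      rw [sub_le_iff_le_add]
      exact le_trans (ciInf_le (Set.finite_range _).bddBelow k) (h1 k)
    refine le_trans h2 (add_le_add_left ?_ _)
    exact le_ciSup (f := fun b : A => ⨅ k : Fin N,
      pexp (P x b k) (fun x' => r x b x' + α * w x')) (Set.finite_range _).bddAbove b
  have hlip : LipschitzWith (Real.toNNReal α) (Tbell r α N P) := by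
    refine LipschitzWith.of_dist_le_mul fun v w => ?_
    rw [Real.coe_toNNReal α hα0.le]
    have hd : 0 ≤ α * dist v w := by positivity
    rw [dist_pi_le_iff hd]
    intro x
    rw [Real.dist_eq, abs_le]
    constructor
    · have := hkey w v x
      rw [dist_comm] at this
      linarith
    · have := hkey v w x
      linarith
  have hcontr : ContractingWith (Real.toNNReal α) (Tbell r α N P) := by
    refine ⟨?_, hlip⟩
    rw [← NNReal.coe_lt_coe, Real.coe_toNNReal α hα0.le]
    exact hα1
  exact ⟨ContractingWith.fixedPoint _ hcontr, hcontr.fixedPoint_isFixedPt⟩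

/-- admissibility of a kernel sequence for a policy -/
def Adm (N : ℕ) (P : X → A → Fin N → PMF X) (a : ℕ → X → A) (K : ℕ → X → PMF X) : Prop :=
  ∀ (t : ℕ) (x' : X), ∃ k : Fin N, K t x' = P x' (a t x') k

set_option maxHeartbeats 1000000 in
/-- The robust value function coincides with any fixed point of the robust
Bellman operator (dynamic programming principle). -/
theorem Vrob_eq_fixedPoint
    (r : X → A → X → ℝ) {α : ℝ} (hα0 : 0 < α) (hα1 : α < 1)
    (N : ℕ) (hN : 0 < N) (P : X → A → Fin N → PMF X)
    (vstar : X → ℝ) (hfix : Tbell r α N P vstar = vstar) :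
    ∀ x, Vrob r α N P x = vstar x := by
  haveI : Nonempty (Fin N) := ⟨⟨0, hN⟩⟩
  -- bounds
  obtain ⟨R, hR⟩ : ∃ R, ∀ x b y, |r x b y| ≤ R := by
    obtain ⟨R, hR⟩ := (Set.finite_range (fun p : X × A × X => |r p.1 p.2.1 p.2.2|)).bddAbove
    exact ⟨R, fun x b y => hR (Set.mem_range_self (x, b, y))⟩
  obtain ⟨M, hM⟩ : ∃ M, ∀ x, |vstar x| ≤ M := by
    obtain ⟨M, hM⟩ := (Set.finite_range (fun x => |vstar x|)).bddAbove
    exact ⟨M, fun x => hM (Set.mem_range_self x)⟩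
  have hR0 : 0 ≤ R := le_trans (abs_nonneg _) (hR (Classical.arbitrary X)
    (Classical.arbitrary A) (Classical.arbitrary X))
  have hM0 : 0 ≤ M := le_trans (abs_nonneg _) (hM (Classical.arbitrary X))
  have h1α : 0 < 1 - α := by linarith
  set C : ℝ := R / (1 - α) + M with hC
  have hC0 : 0 ≤ C := by positivity
  -- the fixed point equation, pointwise, with argmax/argmin selections
  have hfix' : ∀ x, (⨆ b : A, ⨅ k : Fin N,
      pexp (P x b k) (fun x' => r x b x' + α * vstar x')) = vstar x :=
    fun x => congrFun hfix x
  -- any admissible K exists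
  have hK0 : ∀ a : ℕ → X → A, Adm N P a (fun t x => P x (a t x) ⟨0, hN⟩) :=
    fun a t x => ⟨⟨0, hN⟩, rfl⟩
  have hPVabs : ∀ (a : ℕ → X → A) (K : ℕ → X → PMF X) x,
      |policyValue r α a K x| ≤ R / (1 - α) :=
    fun a K x => abs_policyValue_le r hR hα0 hα1 a K x
  ---- Part A : vstar ≤ Vrob ----
  have lemA : ∀ x, vstar x ≤ Vrob r α N P x := by
    choose astar hastar using fun x =>
      exists_eq_ciSup (fun b : A => ⨅ k : Fin N,
        pexp (P x b k) (fun x' => r x b x' + α * vstar x'))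
    set a : ℕ → X → A := fun _ => astar with ha
    have iter : ∀ n (K : ℕ → X → PMF X), Adm N P a K → ∀ x,
        vstar x - α ^ n * C ≤ policyValue r α a K x := by
      intro n
      induction n with
      | zero =>
        intro K _ x
        have h1 := (abs_le.mp (hPVabs a K x)).1
        have h2 := (abs_le.mp (hM x)).2
        simp only [pow_zero, one_mul, hC]
        linarith
      | succ n ih =>
        intro K hK x
        have hshiftA : (fun t : ℕ => a (t + 1)) = a := rfl
        have hAdm' : Adm N P a (fun t => K (t + 1)) := fun t x' => hK (t + 1) x'
        obtain ⟨k0, hk0⟩ := hK 0 x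
        rw [policyValue_rec r hR hα0 hα1, hshiftA, hk0]
        have step1 : pexp (P x (a 0 x) k0)
            (fun x1 => r x (a 0 x) x1 + α * (vstar x1 - α ^ n * C))
            ≤ pexp (P x (a 0 x) k0) (fun x1 => r x (a 0 x) x1 +
              α * policyValue r α a (fun t => K (t + 1)) x1) := by
          refine pexp_mono _ fun x1 => ?_
          have := ih (fun t => K (t + 1)) hAdm' x1
          nlinarith [hα0.le]
        have step2 : pexp (P x (a 0 x) k0)
            (fun x1 => r x (a 0 x) x1 + α * (vstar x1 - α ^ n * C))
            = pexp (P x (a 0 x) k0) (fun x1 => r x (a 0 x) x1 + α * vstar x1)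
              - α ^ (n + 1) * C := by
          have e1 : (fun x1 => r x (a 0 x) x1 + α * (vstar x1 - α ^ n * C))
              = fun x1 => (r x (a 0 x) x1 + α * vstar x1) + (-(α ^ (n + 1) * C)) := by
            funext x1; ring
          rw [e1, pexp_add, pexp_const]
          ring
        have step3 : (⨅ k : Fin N, pexp (P x (a 0 x) k)
              (fun x' => r x (a 0 x) x' + α * vstar x'))
            ≤ pexp (P x (a 0 x) k0) (fun x' => r x (a 0 x) x' + α * vstar x') :=
          ciInf_le (Set.finite_range _).bddBelow k0
        have step4 : vstar x = ⨅ k : Fin N, pexp (P x (a 0 x) k)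
            (fun x' => r x (a 0 x) x' + α * vstar x') :=
          (hfix' x).symm.trans (hastar x)
        linarith [step1, step2, step3]
    intro x
    have hlim : ∀ (K : ℕ → X → PMF X), Adm N P a K → vstar x ≤ policyValue r α a K x := by
      intro K hK
      have htend : Filter.Tendsto (fun n : ℕ => vstar x - α ^ n * C) Filter.atTop
          (nhds (vstar x - 0 * C)) := by
        refine Filter.Tendsto.sub tendsto_const_nhds (Filter.Tendsto.mul_const C ?_)
        exact tendsto_pow_atTop_nhds_zero_of_lt_one hα0.le hα1
      rw [zero_mul, sub_zero] at htend
      exact le_of_tendsto htend (Filter.Eventually.of_forall fun n => iter n K hK x)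
    haveI : Nonempty {K : ℕ → X → PMF X //
        ∀ (t : ℕ) (x' : X), ∃ k : Fin N, K t x' = P x' (a t x') k} := ⟨⟨_, hK0 a⟩⟩
    have h1 : vstar x ≤ ⨅ K : {K : ℕ → X → PMF X //
        ∀ (t : ℕ) (x' : X), ∃ k : Fin N, K t x' = P x' (a t x') k},
        policyValue r α a K.1 x :=
      le_ciInf fun K => hlim K.1 K.2
    refine le_trans h1 ?_
    rw [Vrob]
    refine le_ciSup (f := fun a' : ℕ → X → A => ⨅ K : {K : ℕ → X → PMF X //
      ∀ (t : ℕ) (x' : X), ∃ k : Fin N, K t x' = P x' (a' t x') k},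
      policyValue r α a' K.1 x) ?_ a
    refine ⟨R / (1 - α), ?_⟩
    rintro _ ⟨a', rfl⟩
    refine le_trans (ciInf_le ?_ ⟨_, hK0 a'⟩) (abs_le.mp (hPVabs a' _ x)).2
    exact ⟨-(R / (1 - α)), by rintro _ ⟨K, rfl⟩; exact (abs_le.mp (hPVabs a' K.1 x)).1⟩
  ---- Part B : Vrob ≤ vstar ----
  have lemB : ∀ (n : ℕ) (ε : ℝ), 0 < ε → ∀ a : ℕ → X → A, ∃ K, Adm N P a K ∧
      ∀ x, policyValue r α a K x ≤ vstar x + α ^ n * C + ε := by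
    intro n
    induction n with
    | zero =>
      intro ε hε a
      refine ⟨fun t x => P x (a t x) ⟨0, hN⟩, hK0 a, fun x => ?_⟩
      have h1 := (abs_le.mp (hPVabs a (fun t x => P x (a t x) ⟨0, hN⟩) x)).2
      have h2 := (abs_le.mp (hM x)).1
      simp only [pow_zero, one_mul, hC]
      linarith
    | succ n ih =>
      intro ε hε a
      obtain ⟨K', hK'adm, hK'⟩ := ih ε hε (fun t => a (t + 1))
      choose kmin hkmin using fun x =>
        exists_eq_ciInf (fun k : Fin N =>
          pexp (P x (a 0 x) k) (fun x' => r x (a 0 x) x' + α * vstar x'))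
      refine ⟨fun t => Nat.casesOn t (fun x => P x (a 0 x) (kmin x)) K', ?_, ?_⟩
      · intro t x'
        cases t with
        | zero => exact ⟨kmin x', rfl⟩
        | succ t => exact hK'adm t x'
      · intro x
        set K : ℕ → X → PMF X := fun t => Nat.casesOn t (fun x => P x (a 0 x) (kmin x)) K'
          with hKdef
        have hshift : (fun t : ℕ => K (t + 1)) = K' := rfl
        rw [policyValue_rec r hR hα0 hα1, hshift]
        have hK0x : K 0 x = P x (a 0 x) (kmin x) := rfl
        rw [hK0x]
        have step1 : pexp (P x (a 0 x) (kmin x))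
            (fun x1 => r x (a 0 x) x1 + α * policyValue r α (fun t => a (t + 1)) K' x1)
            ≤ pexp (P x (a 0 x) (kmin x))
              (fun x1 => r x (a 0 x) x1 + α * (vstar x1 + α ^ n * C + ε)) := by
          refine pexp_mono _ fun x1 => ?_
          have := hK' x1
          nlinarith [hα0.le]
        have step2 : pexp (P x (a 0 x) (kmin x))
            (fun x1 => r x (a 0 x) x1 + α * (vstar x1 + α ^ n * C + ε))
            = pexp (P x (a 0 x) (kmin x)) (fun x1 => r x (a 0 x) x1 + α * vstar x1)
              + (α ^ (n + 1) * C + α * ε) := by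
          have e1 : (fun x1 => r x (a 0 x) x1 + α * (vstar x1 + α ^ n * C + ε))
              = fun x1 => (r x (a 0 x) x1 + α * vstar x1) + (α ^ (n + 1) * C + α * ε) := by
            funext x1; ring
          rw [e1, pexp_add, pexp_const]
        have step3 : pexp (P x (a 0 x) (kmin x)) (fun x' => r x (a 0 x) x' + α * vstar x')
            ≤ vstar x := by
          rw [← hkmin x, ← hfix' x]
          exact le_ciSup (f := fun b : A => ⨅ k : Fin N,
            pexp (P x b k) (fun x' => r x b x' + α * vstar x'))
            (Set.finite_range _).bddAbove (a 0 x)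
        have hαε : α * ε ≤ ε := by nlinarith
        linarith [step1, step2, step3]
  have lemB' : ∀ x, Vrob r α N P x ≤ vstar x := by
    intro x
    rw [Vrob]
    refine ciSup_le fun a => ?_
    refine le_of_forall_pos_le_add fun δ hδ => ?_
    obtain ⟨n, hn⟩ : ∃ n : ℕ, α ^ n * C < δ / 2 := by
      have htend : Filter.Tendsto (fun n : ℕ => α ^ n * C) Filter.atTop (nhds (0 * C)) :=
        (tendsto_pow_atTop_nhds_zero_of_lt_one hα0.le hα1).mul_const C
      rw [zero_mul] at htend
      have := (htend.eventually (eventually_lt_nhds (by linarith : (0:ℝ) < δ / 2))).exists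
      exact this
    obtain ⟨K, hKadm, hKle⟩ := lemB n (δ / 2) (by linarith) a
    have h1 : (⨅ K : {K : ℕ → X → PMF X //
        ∀ (t : ℕ) (x' : X), ∃ k : Fin N, K t x' = P x' (a t x') k},
        policyValue r α a K.1 x) ≤ policyValue r α a K x := by
      refine ciInf_le ⟨-(R / (1 - α)), ?_⟩
        (⟨K, hKadm⟩ : {K : ℕ → X → PMF X //
          ∀ (t : ℕ) (x' : X), ∃ k : Fin N, K t x' = P x' (a t x') k})
      rintro _ ⟨K', rfl⟩; exact (abs_le.mp (hPVabs a K'.1 x)).1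
    calc _ ≤ policyValue r α a K x := h1
      _ ≤ vstar x + α ^ n * C + δ / 2 := hKle x
      _ ≤ vstar x + δ := by linarith
  exact fun x => le_antisymm (lemB' x) (lemA x)

end RobustAux

/-- **Fixed-point equation.**  If `0 < α < 1`, the robust optimal `Q`-value
function is a fixed point of the robust Bellman operator:
`𝓗Q*(x,b) = Q*(x,b)` for all `(x,b) ∈ 𝒳 × A`. -/
theorem Qstar_fixed_point {X A : Type} [Fintype X] [Nonempty X]
    [Fintype A] [Nonempty A]
    (r : X → A → X → ℝ) (α : ℝ) (hα0 : 0 < α) (hα1 : α < 1)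
    (N : ℕ) (hN : 0 < N) (P : X → A → Fin N → PMF X) :
    ∀ (x : X) (b : A), Hop r α N P (Qstar r α N P) x b = Qstar r α N P x b := by
  classical
  obtain ⟨vstar, hfix⟩ := RobustAux.exists_Tbell_fixedPoint r hα0 hα1 N hN P
  have hV := RobustAux.Vrob_eq_fixedPoint r hα0 hα1 N hN P vstar hfix
  haveI : Nonempty (Fin N) := ⟨⟨0, hN⟩⟩
  have hsupQ : ∀ x' : X, (⨆ c : A, Qstar r α N P x' c) = Vrob r α N P x' := by
    intro x'
    have h1 : ∀ c : A, Qstar r α N P x' c =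
        ⨅ k : Fin N, pexp (P x' c k) (fun y => r x' c y + α * vstar y) := by
      intro c
      unfold Qstar
      congr 1
      funext k
      congr 1
      funext y
      rw [hV y]
    calc (⨆ c : A, Qstar r α N P x' c)
        = ⨆ c : A, ⨅ k : Fin N, pexp (P x' c k) (fun y => r x' c y + α * vstar y) := by
          exact iSup_congr h1
      _ = Tbell r α N P vstar x' := rfl
      _ = vstar x' := congrFun hfix x'
      _ = Vrob r α N P x' := (hV x').symm
  intro x b
  have heq : (fun x' => r x b x' + α * ⨆ c : A, Qstar r α N P x' c)
      = (fun x' => r x b x' + α * Vrob r α N P x') := by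
    funext x'
    rw [hsupQ x']
  unfold Hop
  rw [heq]
  rfl
end

section
/- Variance bound for the Q-learning target: for every probability measure μ on the finite set 𝒳, all functions q, q* : 𝒳 × A → ℝ, and every (x,a) ∈ 𝒳 × A, Var_μ( X₁ ↦ −r(x,a,X₁) − α max_{b∈A} q(X₁,b) + α min_{y'∈𝒳} max_{b'∈A} q*(y',b') ) ≤ C · (1 + ‖q − q*‖_∞)², where C := 4α² + (2 C_r + α max_{y,y' ∈ 𝒳, b ∈ A} |q*(y,b) − q*(y',b)|)² and C_r := max_{y₀,y₁ ∈ 𝒳, b ∈ A} |r(y₀,b,y₁)|. -/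
open scoped BigOperators

/-- Variance `Var_μ(g) = E_μ[(g − E_μ[g])²]` of `g` under a probability
measure `μ` on the finite set `X`. -/
noncomputable def pvar {X : Type} [Fintype X] (μ : PMF X) (g : X → ℝ) : ℝ :=
  pexp μ (fun x => (g x - pexp μ g) ^ 2)

lemma le_fsup {ι : Type} [Fintype ι] [Nonempty ι] (f : ι → ℝ) (i : ι) :
    f i ≤ ⨆ j, f j :=
  le_ciSup ((Set.finite_range f).bddAbove) i

lemma fsup_le {ι : Type} [Fintype ι] [Nonempty ι] {f : ι → ℝ} {c : ℝ}
    (h : ∀ i, f i ≤ c) : (⨆ i, f i) ≤ c := ciSup_le h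

lemma abs_fsup_sub_fsup {ι : Type} [Fintype ι] [Nonempty ι] (f g : ι → ℝ) {c : ℝ}
    (h : ∀ i, |f i - g i| ≤ c) : |(⨆ i, f i) - ⨆ i, g i| ≤ c := by
  rw [abs_le]
  constructor
  · have : (⨆ i, g i) ≤ (⨆ i, f i) + c := by
      apply fsup_le
      intro i
      have := (abs_le.mp (h i)).1
      have := le_fsup f i
      linarith
    linarith
  · have : (⨆ i, f i) ≤ (⨆ i, g i) + c := by
      apply fsup_le
      intro i
      have := (abs_le.mp (h i)).2
      have := le_fsup g i
      linarith
    linarith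

lemma pexp_sum_one {X : Type} [Fintype X] (p : PMF X) :
    ∑ x, (p x).toReal = 1 := by
  have h : ∑ x, p x = 1 := by rw [← tsum_fintype (L := SummationFilter.unconditional X)]; exact p.tsum_coe
  have : (∑ x, p x).toReal = ∑ x, (p x).toReal :=
    ENNReal.toReal_sum fun a _ => p.apply_ne_top a
  rw [h] at this
  simpa using this.symm

lemma abs_pexp_le {X : Type} [Fintype X] (p : PMF X) (f : X → ℝ) {M : ℝ}
    (h : ∀ y, |f y| ≤ M) : |pexp p f| ≤ M := by
  have hM : ∀ y, |(p y).toReal * f y| ≤ (p y).toReal * M := by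
    intro y
    rw [abs_mul, abs_of_nonneg (ENNReal.toReal_nonneg)]
    exact mul_le_mul_of_nonneg_left (h y) ENNReal.toReal_nonneg
  calc |pexp p f| ≤ ∑ y, |(p y).toReal * f y| := Finset.abs_sum_le_sum_abs _ _
    _ ≤ ∑ y, (p y).toReal * M := Finset.sum_le_sum fun y _ => hM y
    _ = M := by rw [← Finset.sum_mul, pexp_sum_one, one_mul]

lemma pexp_const_sub {X : Type} [Fintype X] (p : PMF X) (g : X → ℝ) (c : ℝ) :
    pexp p (fun y => c - g y) = c - pexp p g := by
  simp only [pexp, mul_sub, Finset.sum_sub_distrib, ← Finset.sum_mul,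
    pexp_sum_one, one_mul]

/-- Variance is bounded by the square of any bound on the oscillation. -/
lemma pvar_le_sq {X : Type} [Fintype X] (μ : PMF X) (g : X → ℝ) {M : ℝ}
    (hM : 0 ≤ M) (h : ∀ y z, |g y - g z| ≤ M) : pvar μ g ≤ M ^ 2 := by
  have key : ∀ y, (g y - pexp μ g) ^ 2 ≤ M ^ 2 := by
    intro y
    have : |g y - pexp μ g| ≤ M := by
      have : g y - pexp μ g = pexp μ (fun z => g y - g z) := by
        rw [pexp_const_sub]
      rw [this]
      exact abs_pexp_le μ _ fun z => h y z
    exact sq_le_sq' (by linarith [(abs_le.mp this).1]) (abs_le.mp this).2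
  have : pvar μ g ≤ pexp μ (fun _ => M ^ 2) := by
    unfold pvar pexp
    apply Finset.sum_le_sum
    intro i _
    exact mul_le_mul_of_nonneg_left (key i) ENNReal.toReal_nonneg
  calc pvar μ g ≤ pexp μ (fun _ => M ^ 2) := this
    _ = M ^ 2 := by
        unfold pexp; rw [← Finset.sum_mul, pexp_sum_one, one_mul]

/-- **Variance bound for the `Q`-learning target.**  For every probability
measure `μ` on the finite set `𝒳`, all `q, q* : 𝒳 × A → ℝ` and every
`(x,a) ∈ 𝒳 × A`,
`Var_μ(X₁ ↦ −r(x,a,X₁) − α max_b q(X₁,b) + α min_{y'} max_{b'} q*(y',b'))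
   ≤ C (1 + ‖q − q*‖_∞)²`,
where `C = 4α² + (2C_r + α max_{y,y',b} |q*(y,b) − q*(y',b)|)²` and
`C_r = max_{y₀,y₁,b} |r(y₀,b,y₁)|`. -/
theorem qlearning_target_variance_bound {X A : Type} [Fintype X] [Nonempty X]
    [Fintype A] [Nonempty A]
    (r : X → A → X → ℝ) (α : ℝ) (hα0 : 0 < α) (hα1 : α < 1)
    (μ : PMF X) (q qstar : X → A → ℝ) (x : X) (a : A) :
    pvar μ (fun x1 => -(r x a x1) - α * (⨆ b : A, q x1 b) +
        α * (⨅ y' : X, ⨆ b' : A, qstar y' b')) ≤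
      (4 * α ^ 2 +
          (2 * (⨆ t : X × A × X, |r t.1 t.2.1 t.2.2|) +
            α * ⨆ t : X × X × A, |qstar t.1 t.2.2 - qstar t.2.1 t.2.2|) ^ 2) *
        (1 + ⨆ p : X × A, |q p.1 p.2 - qstar p.1 p.2|) ^ 2 := by
  set Cr := ⨆ t : X × A × X, |r t.1 t.2.1 t.2.2| with hCr
  set K := ⨆ t : X × X × A, |qstar t.1 t.2.2 - qstar t.2.1 t.2.2| with hK
  set D := ⨆ p : X × A, |q p.1 p.2 - qstar p.1 p.2| with hD
  -- nonnegativity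
  obtain ⟨b0⟩ := (inferInstance : Nonempty A)
  obtain ⟨x0⟩ := (inferInstance : Nonempty X)
  have hCr0 : 0 ≤ Cr := by
    rw [hCr]; exact le_trans (abs_nonneg _) (le_fsup (fun t : X × A × X => |r t.1 t.2.1 t.2.2|) (x0, b0, x0))
  have hK0 : 0 ≤ K := by
    rw [hK]; exact le_trans (abs_nonneg _) (le_fsup (fun t : X × X × A => |qstar t.1 t.2.2 - qstar t.2.1 t.2.2|) (x0, x0, b0))
  have hD0 : 0 ≤ D := by
    rw [hD]; exact le_trans (abs_nonneg _) (le_fsup (fun p : X × A => |q p.1 p.2 - qstar p.1 p.2|) (x0, b0))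
  set M := 2 * Cr + α * K + 2 * α * D with hM
  have hM0 : 0 ≤ M := by positivity
  -- oscillation bound
  have hosc : ∀ y z : X,
      |(-(r x a y) - α * (⨆ b : A, q y b) +
          α * (⨅ y' : X, ⨆ b' : A, qstar y' b')) -
       (-(r x a z) - α * (⨆ b : A, q z b) +
          α * (⨅ y' : X, ⨆ b' : A, qstar y' b'))| ≤ M := by
    intro y z
    have hr1 : |r x a y| ≤ Cr := by rw [hCr]; exact le_fsup (fun t : X × A × X => |r t.1 t.2.1 t.2.2|) (x, a, y)
    have hr2 : |r x a z| ≤ Cr := by rw [hCr]; exact le_fsup (fun t : X × A × X => |r t.1 t.2.1 t.2.2|) (x, a, z)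
    have hq : |(⨆ b : A, q y b) - ⨆ b : A, q z b| ≤ K + 2 * D := by
      apply abs_fsup_sub_fsup
      intro b
      have h1 : |q y b - qstar y b| ≤ D := by rw [hD]; exact le_fsup (fun p : X × A => |q p.1 p.2 - qstar p.1 p.2|) (y, b)
      have h2 : |qstar y b - qstar z b| ≤ K := by rw [hK]; exact le_fsup (fun t : X × X × A => |qstar t.1 t.2.2 - qstar t.2.1 t.2.2|) (y, z, b)
      have h3 : |q z b - qstar z b| ≤ D := by rw [hD]; exact le_fsup (fun p : X × A => |q p.1 p.2 - qstar p.1 p.2|) (z, b)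
      calc |q y b - q z b|
          = |(q y b - qstar y b) + (qstar y b - qstar z b) +
              (qstar z b - q z b)| := by ring_nf
        _ ≤ |q y b - qstar y b| + |qstar y b - qstar z b| +
              |qstar z b - q z b| := by
            exact (abs_add_le _ _).trans (by gcongr; exact abs_add_le _ _)
        _ ≤ D + K + D := by
            have h3' : |qstar z b - q z b| ≤ D := by rwa [abs_sub_comm]
            linarith
        _ = K + 2 * D := by ring
    have : (-(r x a y) - α * (⨆ b : A, q y b) +
          α * (⨅ y' : X, ⨆ b' : A, qstar y' b')) -
       (-(r x a z) - α * (⨆ b : A, q z b) +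
          α * (⨅ y' : X, ⨆ b' : A, qstar y' b'))
        = (r x a z - r x a y) + α * ((⨆ b : A, q z b) - ⨆ b : A, q y b) := by
      ring
    rw [this]
    have habs : |α * ((⨆ b : A, q z b) - ⨆ b : A, q y b)| ≤ α * (K + 2 * D) := by
      rw [abs_mul, abs_of_pos hα0]
      have : |(⨆ b : A, q z b) - ⨆ b : A, q y b| ≤ K + 2 * D := by
        rwa [abs_sub_comm]
      exact mul_le_mul_of_nonneg_left this hα0.le
    calc |(r x a z - r x a y) + α * ((⨆ b : A, q z b) - ⨆ b : A, q y b)|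
        ≤ |r x a z - r x a y| + |α * ((⨆ b : A, q z b) - ⨆ b : A, q y b)| :=
          abs_add_le _ _
      _ ≤ (|r x a z| + |r x a y|) + α * (K + 2 * D) := by
          have h1 := abs_sub (r x a z) (r x a y)
          linarith [habs]
      _ ≤ M := by rw [hM]; nlinarith
  have hvar := pvar_le_sq μ _ hM0 hosc
  refine hvar.trans ?_
  nlinarith [sq_nonneg (2 * α - (2 * Cr + α * K)), sq_nonneg (2 * Cr + α * K),
    mul_nonneg hD0 hD0, sq_nonneg D, mul_nonneg (mul_nonneg hα0.le hα0.le) (mul_nonneg hD0 hD0),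
    mul_nonneg hD0 (sq_nonneg (2 * Cr + α * K))]
end
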